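/- Let x be a sequence of length m with distinct elements, i ∈ {1,...,m-1} with x[i] < x[i+1], and y = τ(x,i) the sequence obtained by swapping positions i and i+1. Then PD_y[i+1] = 0 if PD_x[i] = 0, and PD_y[i+1] = PD_x[i] + 1 otherwise. -/

import Mathlib

/-- Binary tree shapes (Cartesian trees are determined by their shape). -/
inductive BTree : Type
  | nil : BTree
  | node : BTree → BTree → BTree
deriving DecidableEq

namespace BTree

/-- Number of nodes. -/
def size : BTree → ℕ
  | nil => 0
  | node l r => size l + size r + 1

/-- Length of the leftmost path. -/
def LMP : BTree → ℕ
  | nil => 0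
  | node l _ => LMP l + 1

/-- Length of the rightmost path. -/
def RMP : BTree → ℕ
  | nil => 0
  | node _ r => RMP r + 1

end BTree

/-- Minimum value of a list (0 for the empty list). -/
def listMin : List ℤ → ℤ
  | [] => 0
  | a :: t => t.foldl min a

/-- Index (0-based) of the minimum of a list. -/
def minIdx (l : List ℤ) : ℕ := l.idxOf (listMin l)

/-- Cartesian tree of a list, with fuel for termination. -/
def ctreeAux : ℕ → List ℤ → BTree
  | 0, _ => .nil
  | _ + 1, [] => .nil
  | n + 1, a :: t =>
      let g := minIdx (a :: t)
      .node (ctreeAux n ((a :: t).take g)) (ctreeAux n ((a :: t).drop (g + 1)))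

/-- Cartesian tree of a list: the root is the position of the minimum,
its subtrees are the Cartesian trees of the prefix and suffix around it. -/
def ctreeL (l : List ℤ) : BTree := ctreeAux l.length l

/-- The factor x[a..b] (1-based positions) of a sequence, as a list. -/
def seqList (x : ℕ → ℤ) (a b : ℕ) : List ℤ :=
  (List.range (b + 1 - a)).map (fun k => x (a + k))

/-- Cartesian tree of the sequence x[1..m]. -/
def ctreeOf (m : ℕ) (x : ℕ → ℤ) : BTree := ctreeL (seqList x 1 m)

/-- Positions j < h (1-based) with x[j] < x[h]. -/
def PDset (x : ℕ → ℤ) (h : ℕ) : Finset ℕ :=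
  (Finset.Ico 1 h).filter (fun j => x j < x h)

/-- Parent-distance table: PD_x[h] = h - max{j < h : x[j] < x[h]}, 0 if no such j. -/
def PD (x : ℕ → ℤ) (h : ℕ) : ℕ :=
  if hs : (PDset x h).Nonempty then h - (PDset x h).max' hs else 0

/-- Positions h < j ≤ m with x[j] < x[h]. -/
def RPDset (m : ℕ) (x : ℕ → ℤ) (h : ℕ) : Finset ℕ :=
  (Finset.Ioc h m).filter (fun j => x j < x h)

/-- Reverse parent-distance table: RPD_x[h] = min{j > h : x[j] < x[h]} - h, 0 if no such j. -/
def RPD (m : ℕ) (x : ℕ → ℤ) (h : ℕ) : ℕ :=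
  if hs : (RPDset m x h).Nonempty then (RPDset m x h).min' hs - h else 0

/-- Referent of h: the smallest position j > h with x[j] < x[h], or -1 if none. -/
def refD (m : ℕ) (x : ℕ → ℤ) (h : ℕ) : ℤ :=
  if hs : (RPDset m x h).Nonempty then ((RPDset m x h).min' hs : ℤ) else -1

/-- Skipped-number table: SN_x[h] is the number of nodes on the rightmost path of the
left subtree of node h in C(x), i.e. the number of positions whose referent is h. -/
def SN (m : ℕ) (x : ℕ → ℤ) (h : ℕ) : ℕ :=
  ((Finset.Ico 1 h).filter (fun j => refD m x j = (h : ℤ))).card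

/-- The swap τ(x,i): exchange the entries at positions i and i+1. -/
def swapAt (x : ℕ → ℤ) (i : ℕ) : ℕ → ℤ :=
  fun j => if j = i then x (i + 1) else if j = i + 1 then x i else x j

/-- ng(T,i): the Cartesian trees obtained from a sequence realizing T by one swap
at position i (valid positions are 1 ≤ i ≤ m-1). -/
def ngi (m : ℕ) (T : BTree) (i : ℕ) : Set BTree :=
  { S | 1 ≤ i ∧ i + 1 ≤ m ∧ ∃ x : ℕ → ℤ, Set.InjOn x (Set.Icc 1 m) ∧
        ctreeOf m x = T ∧ S = ctreeOf m (swapAt x i) }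

/-- ng(T): the swap neighbourhood of T. -/
def ng (m : ℕ) (T : BTree) : Set BTree := ⋃ i, ngi m T i

/-- Number of permutations of {1,...,n} whose Cartesian tree is A. -/
noncomputable def permCount (n : ℕ) (A : BTree) : ℕ :=
  Set.ncard { σ : Equiv.Perm (Fin n) |
    ctreeL (List.ofFn (fun k : Fin n => ((σ k : ℕ) : ℤ) + 1)) = A }

/-- Product over all nodes t of A of the size of the subtree rooted at t. -/
def hookProd : BTree → ℕ
  | .nil => 1
  | .node l r => (BTree.node l r).size * hookProd l * hookProd r

/-!
Since `x i < x (i + 1)`, the swap puts a larger value in front of `x i`, so the positions before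
`i + 1` holding a value below `swapAt x i (i + 1) = x i` are exactly the positions before `i`
holding a value below `x i`: the nearest smaller value to the left is the same position, now one
step further away.
-/

theorem max'_PDset_lt (x : ℕ → ℤ) (h : ℕ) (hs : (PDset x h).Nonempty) :
    (PDset x h).max' hs < h :=
  (Finset.mem_Ico.mp (Finset.mem_filter.mp ((PDset x h).max'_mem hs)).1).2

theorem PD_succ_of_PDset_eq {x y : ℕ → ℤ} {h : ℕ} (hxy : PDset y (h + 1) = PDset x h) :
    PD y (h + 1) = if PD x h = 0 then 0 else PD x h + 1 := by
  by_cases hs : (PDset x h).Nonempty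
  · have hs' : (PDset y (h + 1)).Nonempty := hxy ▸ hs
    have hmax : (PDset y (h + 1)).max' hs' = (PDset x h).max' hs := by congr 1
    have hlt := max'_PDset_lt x h hs
    rw [PD, PD, dif_pos hs, dif_pos hs', hmax, if_neg (by omega)]
    omega
  · have hs' : ¬(PDset y (h + 1)).Nonempty := hxy ▸ hs
    rw [PD, PD, dif_neg hs, dif_neg hs', if_pos rfl]

theorem PDset_swapAt_succ {x : ℕ → ℤ} {i : ℕ} (hlt : x i < x (i + 1)) :
    PDset (swapAt x i) (i + 1) = PDset x i := by
  have hy : swapAt x i (i + 1) = x i := by simp [swapAt]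
  ext j
  simp only [PDset, Finset.mem_filter, Finset.mem_Ico, hy]
  rcases lt_trichotomy j i with hj | rfl | hj
  · have hj' : j ≠ i + 1 := by omega
    simp [swapAt, hj.ne, hj', hj, hj.trans i.lt_succ_self]
  · simp [swapAt, hlt.le]
  · constructor <;> rintro ⟨⟨-, _⟩, -⟩ <;> omega

theorem stmt2_general (i : ℕ) (x : ℕ → ℤ) (hlt : x i < x (i + 1)) :
    PD (swapAt x i) (i + 1) = if PD x i = 0 then 0 else PD x i + 1 :=
  PD_succ_of_PDset_eq (PDset_swapAt_succ hlt)

theorem stmt2 (m i : ℕ) (x : ℕ → ℤ) (hx : Set.InjOn x (Set.Icc 1 m))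
    (hi1 : 1 ≤ i) (him : i + 1 ≤ m) (hlt : x i < x (i + 1)) :
    PD (swapAt x i) (i + 1) = if PD x i = 0 then 0 else PD x i + 1 :=
  stmt2_general i x hlt
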